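/- arXiv:2502.21222 — 2 statements merged into one kernel-verified Lean document; each statement's English description precedes it below -/
import Mathlib

section
/- The semiminor axis b of the Kepler ellipse with energy H < 0 and angular momentum L satisfies 4b² = −2|L|²/(μH), where 2a = −k/H is the major axis and 2c = |K|/(−μH) is the focal distance, a² = b² + c². -/
/-!
Everything rests on the Laplace–Runge–Lenz identity `‖K‖² = (kμ)² + 2μH‖L‖²`: expanding
`‖p × L - (kμ/‖r‖) r‖²`, the first term is `‖p‖²‖L‖²` because `p ⊥ L`, and the cross term is
governed by the triple product `⟪p × L, r⟫ = ⟪r × p, L⟫ = ‖L‖²`. Then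
`a² - c² = ((kμ)² - ‖K‖²) / (2μH)² = -‖L‖² / (2μH)`.
-/

open RealInnerProductSpace

noncomputable def cross3 (a b : EuclideanSpace ℝ (Fin 3)) : EuclideanSpace ℝ (Fin 3) :=
  WithLp.toLp 2 ![a 1 * b 2 - a 2 * b 1, a 2 * b 0 - a 0 * b 2, a 0 * b 1 - a 1 * b 0]

section Cross3

variable (a b c : EuclideanSpace ℝ (Fin 3))

lemma inner_eq_sum_three : ⟪a, b⟫ = a 0 * b 0 + a 1 * b 1 + a 2 * b 2 := by
  simp only [PiLp.inner_apply, Fin.sum_univ_three, RCLike.inner_apply, conj_trivial]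
  ring

lemma norm_sq_eq_sum_three : ‖a‖ ^ 2 = a 0 ^ 2 + a 1 ^ 2 + a 2 ^ 2 := by
  rw [← real_inner_self_eq_norm_sq, inner_eq_sum_three]
  ring

lemma cross3_apply_zero : cross3 a b 0 = a 1 * b 2 - a 2 * b 1 := rfl

lemma cross3_apply_one : cross3 a b 1 = a 2 * b 0 - a 0 * b 2 := rfl

lemma cross3_apply_two : cross3 a b 2 = a 0 * b 1 - a 1 * b 0 := rfl

lemma inner_cross3_left : ⟪cross3 a b, c⟫ = ⟪a, cross3 b c⟫ := by
  simp only [inner_eq_sum_three, cross3_apply_zero, cross3_apply_one, cross3_apply_two]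
  ring

lemma inner_cross3_self_right : ⟪b, cross3 a b⟫ = 0 := by
  simp only [inner_eq_sum_three, cross3_apply_zero, cross3_apply_one, cross3_apply_two]
  ring

lemma norm_cross3_sq : ‖cross3 a b‖ ^ 2 = ‖a‖ ^ 2 * ‖b‖ ^ 2 - ⟪a, b⟫ ^ 2 := by
  simp only [norm_sq_eq_sum_three, inner_eq_sum_three, cross3_apply_zero, cross3_apply_one,
    cross3_apply_two]
  ring

end Cross3

/-- The Laplace–Runge–Lenz identity; `c` plays the role of `kμ`. -/
lemma norm_cross3_cross3_sub_smul_sq {r : EuclideanSpace ℝ (Fin 3)} (hr : r ≠ 0)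
    (p : EuclideanSpace ℝ (Fin 3)) (c : ℝ) :
    ‖cross3 p (cross3 r p) - (c / ‖r‖) • r‖ ^ 2
      = c ^ 2 + (‖p‖ ^ 2 - 2 * c / ‖r‖) * ‖cross3 r p‖ ^ 2 := by
  have hr' : ‖r‖ ≠ 0 := norm_ne_zero_iff.mpr hr
  have h_perp : ⟪p, cross3 r p⟫ = 0 := inner_cross3_self_right r p
  have h_triple : ⟪cross3 p (cross3 r p), r⟫ = ‖cross3 r p‖ ^ 2 := by
    rw [real_inner_comm, ← inner_cross3_left, real_inner_self_eq_norm_sq]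
  rw [norm_sub_sq_real, norm_smul, inner_smul_right, h_triple, norm_cross3_sq p, h_perp,
    Real.norm_eq_abs, mul_pow, sq_abs]
  field_simp
  ring

theorem semiminor_axis_general
    (r p : EuclideanSpace ℝ (Fin 3)) (μ k H : ℝ)
    (hr : r ≠ 0) (hμ : 0 < μ)
    (L : EuclideanSpace ℝ (Fin 3)) (hL : L = cross3 r p)
    (hH : H = ‖p‖ ^ 2 / (2 * μ) - k / ‖r‖) (hHneg : H < 0)
    (K : EuclideanSpace ℝ (Fin 3))
    (hK : K = cross3 p L - ((k * μ) / ‖r‖) • r)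
    (a c b : ℝ) (ha : a = -k / (2 * H)) (hc : c = ‖K‖ / (-(2 * μ * H)))
    (hb2 : b ^ 2 = a ^ 2 - c ^ 2) :
    b ^ 2 = -‖L‖ ^ 2 / (2 * μ * H) := by
  have hK_sq : ‖K‖ ^ 2 = (k * μ) ^ 2 + 2 * μ * H * ‖L‖ ^ 2 := by
    rw [hK, hL, norm_cross3_cross3_sub_smul_sq hr, hH]
    field_simp
  rw [hb2, ha, hc, div_pow ‖K‖, hK_sq]
  field_simp [hμ.ne', hHneg.ne]
  ring

/-- The semiminor axis of the Kepler ellipse: b² = −|L|²/(2μH). -/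
theorem semiminor_axis
    (r p : EuclideanSpace ℝ (Fin 3)) (μ k H : ℝ)
    (hr : r ≠ 0) (hμ : 0 < μ) (hk : 0 < k)
    (L : EuclideanSpace ℝ (Fin 3)) (hL : L = cross3 r p) (hLne : L ≠ 0)
    (hH : H = ‖p‖ ^ 2 / (2 * μ) - k / ‖r‖) (hHneg : H < 0)
    (K : EuclideanSpace ℝ (Fin 3))
    (hK : K = cross3 p L - ((k * μ) / ‖r‖) • r)
    (a c b : ℝ) (ha : a = -k / (2 * H)) (hc : c = ‖K‖ / (-(2 * μ * H)))
    (hb : 0 ≤ b) (hb2 : b ^ 2 = a ^ 2 - c ^ 2) :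
    b ^ 2 = -‖L‖ ^ 2 / (2 * μ * H) :=
  semiminor_axis_general r p μ k H hr hμ L hL hH hHneg K hK a c b ha hc hb2
end

section
/- For any Kepler ellipse with energy H < 0 passing through a fixed point r, the second focus t = K/(μH) satisfies |t − r| = −k/H − |r| = 2a − |r|. Hence the locus of second foci of all Kepler ellipses with energy H through r is contained in the circle with center r and radius 2a − |r|. -/
/-!
Expanding the double cross product, K = μH r + v with v = (|p|²/2) r − ⟨r, p⟩ p, so
t − r = v/(μH). The vector v is −|p|²/2 times the reflection of r in the line ℝp, hence
|v| = |p|²|r|/2, and the energy relation turns |p|²|r|/(−2μH) into −k/H − |r|.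
-/

open RealInnerProductSpace
open Matrix

theorem cross3_eq_toLp_crossProduct (a b : EuclideanSpace ℝ (Fin 3)) :
    cross3 a b = WithLp.toLp 2 (WithLp.ofLp a ⨯₃ WithLp.ofLp b) := rfl

theorem cross3_cross3 (u v w : EuclideanSpace ℝ (Fin 3)) :
    cross3 u (cross3 v w) = ⟪u, w⟫ • v - ⟪u, v⟫ • w := by
  rw [cross3_eq_toLp_crossProduct, cross3_eq_toLp_crossProduct, WithLp.ofLp_toLp,
    cross_cross_eq_smul_sub_smul', EuclideanSpace.inner_eq_star_dotProduct,
    EuclideanSpace.inner_eq_star_dotProduct]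
  simp [dotProduct_comm]

theorem norm_half_norm_sq_smul_sub_inner_smul {E : Type*} [NormedAddCommGroup E]
    [InnerProductSpace ℝ E] (r p : E) :
    ‖(‖p‖ ^ 2 / 2) • r - ⟪r, p⟫ • p‖ = ‖p‖ ^ 2 * ‖r‖ / 2 := by
  rw [← sq_eq_sq₀ (norm_nonneg _) (by positivity), @norm_sub_sq_real, norm_smul, norm_smul,
    inner_smul_left, inner_smul_right]
  simp only [Real.norm_eq_abs, mul_pow, sq_abs, conj_trivial]
  ring

theorem inv_smul_laplaceRungeLenz_sub (r p : EuclideanSpace ℝ (Fin 3)) {μ k H : ℝ}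
    (hH : H = ‖p‖ ^ 2 / (2 * μ) - k / ‖r‖) (hμH : μ * H ≠ 0) :
    (μ * H)⁻¹ • (cross3 p (cross3 r p) - ((k * μ) / ‖r‖) • r) - r =
      (μ * H)⁻¹ • ((‖p‖ ^ 2 / 2) • r - ⟪r, p⟫ • p) := by
  have hμ : μ ≠ 0 := left_ne_zero_of_mul hμH
  have hμH' : μ * H = ‖p‖ ^ 2 / 2 - k * μ / ‖r‖ := by
    rw [hH]; field_simp
  rw [cross3_cross3, real_inner_self_eq_norm_sq, real_inner_comm]
  calc (μ * H)⁻¹ • (‖p‖ ^ 2 • r - ⟪r, p⟫ • p - (k * μ / ‖r‖) • r) - r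
      = (μ * H)⁻¹ • ((μ * H) • r + ((‖p‖ ^ 2 / 2) • r - ⟪r, p⟫ • p)) - r := by
        rw [hμH']; module
    _ = _ := by rw [smul_add, inv_smul_smul₀ hμH, add_sub_cancel_left]

theorem neg_div_sub_eq_of_energy {P R μ k H : ℝ} (hH : H = P ^ 2 / (2 * μ) - k / R)
    (hR : R ≠ 0) (hμ : μ ≠ 0) (hH0 : H ≠ 0) :
    -k / H - R = -(μ * H)⁻¹ * (P ^ 2 * R / 2) := by
  field_simp
  rw [hH]
  field_simp
  ring

theorem second_focus_on_circle_general
    (r p : EuclideanSpace ℝ (Fin 3)) (μ k H a : ℝ)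
    (hr : r ≠ 0) (hμ : 0 < μ)
    (L : EuclideanSpace ℝ (Fin 3)) (hL : L = cross3 r p)
    (hH : H = ‖p‖ ^ 2 / (2 * μ) - k / ‖r‖) (hHneg : H < 0)
    (K t : EuclideanSpace ℝ (Fin 3))
    (hK : K = cross3 p L - ((k * μ) / ‖r‖) • r)
    (ht : t = (μ * H)⁻¹ • K) (ha : a = -k / (2 * H)) :
    ‖t - r‖ = -k / H - ‖r‖ ∧ ‖t - r‖ = 2 * a - ‖r‖ := by
  have hμH : μ * H < 0 := mul_neg_of_pos_of_neg hμ hHneg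
  have hdist : ‖t - r‖ = -(μ * H)⁻¹ * (‖p‖ ^ 2 * ‖r‖ / 2) := by
    rw [ht, hK, hL, inv_smul_laplaceRungeLenz_sub r p hH hμH.ne, norm_smul,
      norm_half_norm_sq_smul_sub_inner_smul, Real.norm_eq_abs, abs_of_neg (inv_lt_zero.2 hμH)]
  have hfocus : ‖t - r‖ = -k / H - ‖r‖ := by
    rw [hdist, neg_div_sub_eq_of_energy hH (norm_ne_zero_iff.2 hr) hμ.ne' hHneg.ne]
  refine ⟨hfocus, ?_⟩
  rw [hfocus, ha]
  field_simp

/-- For a Kepler ellipse with energy H < 0 through the point r, the second focus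
t = K/(μH) satisfies |t − r| = 2a − |r| with a = −k/(2H): the locus of second foci lies
on the circle with center r and radius 2a − |r|. -/
theorem second_focus_on_circle
    (r p : EuclideanSpace ℝ (Fin 3)) (μ k H a : ℝ)
    (hr : r ≠ 0) (hμ : 0 < μ) (hk : 0 < k)
    (L : EuclideanSpace ℝ (Fin 3)) (hL : L = cross3 r p) (hLne : L ≠ 0)
    (hH : H = ‖p‖ ^ 2 / (2 * μ) - k / ‖r‖) (hHneg : H < 0)
    (K t : EuclideanSpace ℝ (Fin 3))
    (hK : K = cross3 p L - ((k * μ) / ‖r‖) • r)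
    (ht : t = (μ * H)⁻¹ • K) (ha : a = -k / (2 * H)) :
    ‖t - r‖ = -k / H - ‖r‖ ∧ ‖t - r‖ = 2 * a - ‖r‖ :=
  second_focus_on_circle_general r p μ k H a hr hμ L hL hH hHneg K t hK ht ha
end
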